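/- arXiv:1802.05759 — 8 statements merged into one kernel-verified Lean document; each statement's English description precedes it below -/
import Mathlib

section
/- Let A ∈ ℂ^{m×m}, B ∈ ℂ^{n×n}, c ∈ ℂ^m, d ∈ ℂ^n. Let U ∈ ℂ^{m×k} have orthonormal columns spanning span{c, Ac, ..., A^{k-1}c} (assumed of dimension k), and let V ∈ ℂ^{n×ℓ} have orthonormal columns spanning span{d, Bd, ..., B^{ℓ-1}d} (assumed of dimension ℓ). Set G = U* A U, H = V* B V, c̃ = U* c, d̃ = V* d. Then for every family of complex coefficients (p_{ij}) with 0 ≤ i ≤ k−1, 0 ≤ j ≤ ℓ−1 one has Σ_{i=0}^{k−1} Σ_{j=0}^{ℓ−1} p_{ij} (A^i c)(B^j d)^T = U ( Σ_{i=0}^{k−1} Σ_{j=0}^{ℓ−1} p_{ij} (G^i c̃)(H^j d̃)^T ) V^T. -/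
open Matrix

/-! If `L * U = 1` and the Krylov vectors `c, A c, …, Aⁱ c` lie in the column space of `U`, then
`U * L` fixes them, so `L A U` acts on `L c` exactly as `A` acts on `c`, up to the `i`-th power:
`U (L A U)ⁱ L c = Aⁱ c`. Applied to `(A, c, U, Uᴴ)` and `(B, d, V, Vᴴ)`, together with
`U (x yᵀ) Vᵀ = (U x)(V y)ᵀ`, this turns each term `U (Gⁱ c̃)(Hʲ d̃)ᵀ Vᵀ` into `(Aⁱ c)(Bʲ d)ᵀ`. -/

section Compression

variable {R : Type*} [CommSemiring R] {m k : Type*} [Fintype m] [Fintype k] [DecidableEq k]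
  {U : Matrix m k R} {L : Matrix k m R}

theorem mulVec_mulVec_of_mem_span_col (hLU : L * U = 1) {x : m → R}
    (hx : x ∈ Submodule.span R (Set.range U.col)) : U *ᵥ (L *ᵥ x) = x := by
  rw [← range_mulVecLin] at hx
  obtain ⟨y, rfl⟩ := hx
  rw [mulVecLin_apply, mulVec_mulVec, mulVec_mulVec, Matrix.mul_assoc, hLU, Matrix.mul_one]

variable [DecidableEq m]

theorem pow_compression_mulVec (hLU : L * U = 1) (A : Matrix m m R) (c : m → R) (i : ℕ)
    (hK : ∀ j < i, A ^ j *ᵥ c ∈ Submodule.span R (Set.range U.col)) :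
    (L * A * U) ^ i *ᵥ (L *ᵥ c) = L *ᵥ (A ^ i *ᵥ c) := by
  induction i with
  | zero => simp
  | succ i ih =>
    calc (L * A * U) ^ (i + 1) *ᵥ (L *ᵥ c)
        = (L * A) *ᵥ (U *ᵥ (L *ᵥ (A ^ i *ᵥ c))) := by
          rw [pow_succ', ← mulVec_mulVec, ih fun j hj => hK j (by omega), ← mulVec_mulVec _ (L * A)]
      _ = L *ᵥ (A ^ (i + 1) *ᵥ c) := by
          rw [mulVec_mulVec_of_mem_span_col hLU (hK i (by omega)), pow_succ', mulVec_mulVec,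
            mulVec_mulVec, Matrix.mul_assoc]

theorem mulVec_pow_compression_mulVec (hLU : L * U = 1) (A : Matrix m m R) (c : m → R) (i : ℕ)
    (hK : ∀ j ≤ i, A ^ j *ᵥ c ∈ Submodule.span R (Set.range U.col)) :
    U *ᵥ ((L * A * U) ^ i *ᵥ (L *ᵥ c)) = A ^ i *ᵥ c := by
  rw [pow_compression_mulVec hLU A c i fun j hj => hK j hj.le,
    mulVec_mulVec_of_mem_span_col hLU (hK i le_rfl)]

end Compression

theorem bivariate_arnoldi_exactness_general {m n k l : ℕ}
    (A : Matrix (Fin m) (Fin m) ℂ) (B : Matrix (Fin n) (Fin n) ℂ)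
    (c : Fin m → ℂ) (d : Fin n → ℂ)
    (U : Matrix (Fin m) (Fin k) ℂ) (V : Matrix (Fin n) (Fin l) ℂ)
    (hU : Uᴴ * U = 1) (hV : Vᴴ * V = 1)
    (hspanU : Submodule.span ℂ {v : Fin m → ℂ | ∃ i < k, v = (A ^ i) *ᵥ c} =
      Submodule.span ℂ (Set.range fun j : Fin k => fun a => U a j))
    (hspanV : Submodule.span ℂ {v : Fin n → ℂ | ∃ j < l, v = (B ^ j) *ᵥ d} =
      Submodule.span ℂ (Set.range fun j : Fin l => fun b => V b j))
    (p : Fin k → Fin l → ℂ) :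
    ∑ i : Fin k, ∑ j : Fin l,
        p i j • vecMulVec ((A ^ (i : ℕ)) *ᵥ c) ((B ^ (j : ℕ)) *ᵥ d) =
    U * (∑ i : Fin k, ∑ j : Fin l,
        p i j • vecMulVec (((Uᴴ * A * U) ^ (i : ℕ)) *ᵥ (Uᴴ *ᵥ c))
          (((Vᴴ * B * V) ^ (j : ℕ)) *ᵥ (Vᴴ *ᵥ d))) * Vᵀ := by
  have hKU (i : Fin k) : ∀ i' ≤ (i : ℕ), A ^ i' *ᵥ c ∈ Submodule.span ℂ (Set.range U.col) :=
    fun i' hi' => hspanU ▸ Submodule.subset_span ⟨i', by omega, rfl⟩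
  have hKV (j : Fin l) : ∀ j' ≤ (j : ℕ), B ^ j' *ᵥ d ∈ Submodule.span ℂ (Set.range V.col) :=
    fun j' hj' => hspanV ▸ Submodule.subset_span ⟨j', by omega, rfl⟩
  simp only [Matrix.mul_sum, Matrix.sum_mul, Matrix.mul_smul, Matrix.smul_mul, mul_vecMulVec,
    vecMulVec_mul, vecMul_transpose, mulVec_pow_compression_mulVec hU _ _ _ (hKU _),
    mulVec_pow_compression_mulVec hV _ _ _ (hKV _)]

/-- Exactness of the tensorized Krylov (Arnoldi) approximation for bivariate polynomials of
bidegree at most `(k-1, ℓ-1)`: with `G = Uᴴ A U`, `H = Vᴴ B V`, `c̃ = Uᴴ c`, `d̃ = Vᴴ d`,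
one has `Σᵢⱼ pᵢⱼ (Aⁱc)(Bʲd)ᵀ = U (Σᵢⱼ pᵢⱼ (Gⁱc̃)(Hʲd̃)ᵀ) Vᵀ`. -/
theorem bivariate_arnoldi_exactness {m n k l : ℕ}
    (A : Matrix (Fin m) (Fin m) ℂ) (B : Matrix (Fin n) (Fin n) ℂ)
    (c : Fin m → ℂ) (d : Fin n → ℂ)
    (U : Matrix (Fin m) (Fin k) ℂ) (V : Matrix (Fin n) (Fin l) ℂ)
    (hU : Uᴴ * U = 1) (hV : Vᴴ * V = 1)
    (hspanU : Submodule.span ℂ {v : Fin m → ℂ | ∃ i < k, v = (A ^ i) *ᵥ c} =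
      Submodule.span ℂ (Set.range fun j : Fin k => fun a => U a j))
    (hdimU : Module.finrank ℂ
      (Submodule.span ℂ {v : Fin m → ℂ | ∃ i < k, v = (A ^ i) *ᵥ c}) = k)
    (hspanV : Submodule.span ℂ {v : Fin n → ℂ | ∃ j < l, v = (B ^ j) *ᵥ d} =
      Submodule.span ℂ (Set.range fun j : Fin l => fun b => V b j))
    (hdimV : Module.finrank ℂ
      (Submodule.span ℂ {v : Fin n → ℂ | ∃ j < l, v = (B ^ j) *ᵥ d}) = l)
    (p : Fin k → Fin l → ℂ) :
    ∑ i : Fin k, ∑ j : Fin l,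
        p i j • vecMulVec ((A ^ (i : ℕ)) *ᵥ c) ((B ^ (j : ℕ)) *ᵥ d) =
    U * (∑ i : Fin k, ∑ j : Fin l,
        p i j • vecMulVec (((Uᴴ * A * U) ^ (i : ℕ)) *ᵥ (Uᴴ *ᵥ c))
          (((Vᴴ * B * V) ^ (j : ℕ)) *ᵥ (Vᴴ *ᵥ d))) * Vᵀ :=
  bivariate_arnoldi_exactness_general A B c d U V hU hV hspanU hspanV p
end

section
/- Let A ∈ ℂ^{m×m}, B ∈ ℂ^{n×n}, C ∈ ℂ^{m×n}, and suppose B is diagonalizable: there exists an invertible Q ∈ ℂ^{n×n} with Q^{-1} B Q = diag(μ_1, ..., μ_n). Let p(x,y) = Σ_{i=0}^{k} Σ_{j=0}^{ℓ} p_{ij} x^i y^j be a bivariate polynomial and set C̃ = C Q^{-T} with columns c̃_1, ..., c̃_n. Then p{A,B}(C) = [ p_{μ_1}(A) c̃_1, p_{μ_2}(A) c̃_2, ..., p_{μ_n}(A) c̃_n ] Q^T, where p_μ(A) := Σ_{i=0}^{k} (Σ_{j=0}^{ℓ} p_{ij} μ^j) A^i, i.e., the j-th column of p{A,B}(C) Q^{-T}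 equals p_{μ_j}(A) c̃_j. -/
/-!
Transposing `Q⁻¹ B = diag(μ) Q⁻¹` shows that `Q⁻ᵀ` intertwines `Bᵀ` with `diag(μ)`, so
`p{A,B}(C) Q⁻ᵀ = p{A,diag(μ)}(C Q⁻ᵀ)`. With a diagonal second argument the columns decouple:
the `b`-th column of `Aⁱ C̃ diag(μ)ʲ` is `μ_bʲ Aⁱ c̃_b`.
-/

open Matrix

section

variable {R : Type*} [CommSemiring R] {m n : Type*} [Fintype m] [DecidableEq m]
  [Fintype n] [DecidableEq n] {k l : ℕ}

def bivariateMatrixFun (p : Fin (k + 1) → Fin (l + 1) → R) (A : Matrix m m R)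
    (B : Matrix n n R) (C : Matrix m n R) : Matrix m n R :=
  ∑ i : Fin (k + 1), ∑ j : Fin (l + 1), p i j • (A ^ (i : ℕ) * C * Bᵀ ^ (j : ℕ))

/-- `p_μ(A)`, the matrix function of the univariate polynomial `x ↦ p(x, μ)`. -/
def partialMatrixFun (p : Fin (k + 1) → Fin (l + 1) → R) (μ : R) (A : Matrix m m R) :
    Matrix m m R :=
  ∑ i : Fin (k + 1), (∑ j : Fin (l + 1), p i j * μ ^ (j : ℕ)) • A ^ (i : ℕ)

theorem bivariateMatrixFun_mul_of_semiconjBy {p : Fin (k + 1) → Fin (l + 1) → R}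
    {A : Matrix m m R} {B E S : Matrix n n R} (h : SemiconjBy S Eᵀ Bᵀ) (C : Matrix m n R) :
    bivariateMatrixFun p A B C * S = bivariateMatrixFun p A E (C * S) := by
  simp only [bivariateMatrixFun, Matrix.sum_mul, Matrix.smul_mul, Matrix.mul_assoc,
    (h.pow_right _).eq]

theorem bivariateMatrixFun_diagonal_col (p : Fin (k + 1) → Fin (l + 1) → R)
    (A : Matrix m m R) (μ : n → R) (C : Matrix m n R) (b : n) :
    (bivariateMatrixFun p A (diagonal μ) C)ᵀ b = partialMatrixFun p (μ b) A *ᵥ Cᵀ b := by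
  ext a
  simp only [bivariateMatrixFun, partialMatrixFun, diagonal_transpose, diagonal_pow,
    transpose_apply, Matrix.sum_apply, Matrix.smul_apply, mul_diagonal, sum_mulVec,
    Finset.sum_apply, smul_mulVec, Pi.smul_apply, smul_eq_mul, Finset.sum_mul]
  refine Finset.sum_congr rfl fun i _ => Finset.sum_congr rfl fun j _ => ?_
  change p i j * ((A ^ (i : ℕ) * C) a b * μ b ^ (j : ℕ)) = _ * (A ^ (i : ℕ) * C) a b
  ring

end

theorem semiconjBy_inv_transpose_of_inv_mul_mul_eq_diagonal {R : Type*} [CommRing R]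
    {n : Type*} [Fintype n] [DecidableEq n] {B Q : Matrix n n R} {μ : n → R}
    (hQ : IsUnit Q.det) (hB : Q⁻¹ * B * Q = diagonal μ) :
    SemiconjBy (Q⁻¹)ᵀ (diagonal μ)ᵀ Bᵀ := by
  have hQB : Q⁻¹ * B = diagonal μ * Q⁻¹ := by
    rw [← hB, mul_nonsing_inv_cancel_right _ _ hQ]
  simp only [SemiconjBy, ← transpose_mul, hQB]

/-- Diagonalization of the second argument of a bivariate (polynomial) matrix function:
if `Q⁻¹ B Q = diag(μ)`, then the `b`-th column of `p{A,B}(C) Q⁻ᵀ` equals `p_{μ_b}(A) c̃_b`,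
where `c̃_b` is the `b`-th column of `C̃ = C Q⁻ᵀ` and `p_μ(A) = Σᵢ (Σⱼ pᵢⱼ μʲ) Aⁱ`. -/
theorem bivariate_diag_second_arg {m n k l : ℕ}
    (A : Matrix (Fin m) (Fin m) ℂ) (B Q : Matrix (Fin n) (Fin n) ℂ)
    (C : Matrix (Fin m) (Fin n) ℂ) (μ : Fin n → ℂ)
    (hQ : IsUnit Q.det)
    (hB : Q⁻¹ * B * Q = Matrix.diagonal μ)
    (p : Fin (k + 1) → Fin (l + 1) → ℂ) :
    ∀ b : Fin n,
      (fun a => ((∑ i : Fin (k + 1), ∑ j : Fin (l + 1),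
          p i j • (A ^ (i : ℕ) * C * Bᵀ ^ (j : ℕ))) * (Q⁻¹)ᵀ) a b) =
      (∑ i : Fin (k + 1), (∑ j : Fin (l + 1), p i j * μ b ^ (j : ℕ)) • A ^ (i : ℕ)) *ᵥ
        (fun a => (C * (Q⁻¹)ᵀ) a b) := by
  intro b
  have hdiag : bivariateMatrixFun p A B C * (Q⁻¹)ᵀ
      = bivariateMatrixFun p A (diagonal μ) (C * (Q⁻¹)ᵀ) :=
    bivariateMatrixFun_mul_of_semiconjBy
      (semiconjBy_inv_transpose_of_inv_mul_mul_eq_diagonal hQ hB) C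
  exact (congrArg (·ᵀ b) hdiag).trans (bivariateMatrixFun_diagonal_col p A μ _ b)
end

section
/- Let A ∈ ℂ^{m×m} and B ∈ ℂ^{n×n} both be diagonalizable: P^{-1} A P = diag(λ_1, ..., λ_m) and Q^{-1} B Q = diag(μ_1, ..., μ_n) for invertible P, Q. Then for every bivariate polynomial p(x,y) = Σ_{i=0}^{k} Σ_{j=0}^{ℓ} p_{ij} x^i y^j and every C ∈ ℂ^{m×n}, p{A,B}(C) = P ( F ∘ C̃ ) Q^T, where C̃ = P^{-1} C Q^{-T}, F ∈ ℂ^{m×n} is the matrix with entries F_{ab} = p(λ_a, μ_b), and ∘ denotes the entrywise (Hadamard) product. -/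
/-! Since `A = P diag(λ) P⁻¹` and `Bᵀ = Q⁻ᵀ diag(μ) Qᵀ`, each monomial is
`A^i C (Bᵀ)^j = P (diag(λ^i) C̃ diag(μ^j)) Qᵀ`, and multiplying `C̃` by diagonal matrices on
both sides scales its `(a, b)` entry by `λ_a^i μ_b^j`; summing over the monomials gives `F ∘ C̃`. -/

open Matrix

variable {N K : Type*} [Fintype N] [DecidableEq N] [CommRing K]

theorem Matrix.pow_eq_mul_diagonal_pow_mul_inv {A P : Matrix N N K} {d : N → K}
    (hP : IsUnit P.det) (h : P⁻¹ * A * P = diagonal d) (i : ℕ) :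
    A ^ i = P * diagonal (d ^ i) * P⁻¹ := by
  have hconj : P⁻¹ * A ^ i * P = diagonal (d ^ i) := by
    rw [← diagonal_pow, ← h]
    exact (Units.conj_pow' ⟨P, P⁻¹, mul_nonsing_inv P hP, nonsing_inv_mul P hP⟩ A i).symm
  rw [← hconj, ← Matrix.mul_assoc, ← Matrix.mul_assoc, mul_nonsing_inv P hP, Matrix.one_mul,
    Matrix.mul_assoc, mul_nonsing_inv P hP, Matrix.mul_one]

theorem Matrix.transpose_pow_eq_mul_diagonal_pow_mul {B Q : Matrix N N K} {d : N → K}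
    (hQ : IsUnit Q.det) (h : Q⁻¹ * B * Q = diagonal d) (j : ℕ) :
    Bᵀ ^ j = Q⁻¹ᵀ * diagonal (d ^ j) * Qᵀ := by
  rw [← transpose_pow, pow_eq_mul_diagonal_pow_mul_inv hQ h, transpose_mul, transpose_mul,
    diagonal_transpose, Matrix.mul_assoc]

/-- Two-sided diagonalization formula for bivariate (polynomial) matrix functions:
if `P⁻¹ A P = diag(λ)` and `Q⁻¹ B Q = diag(μ)` then
`p{A,B}(C) = P (F ∘ C̃) Qᵀ` with `C̃ = P⁻¹ C Q⁻ᵀ`, `F_{ab} = p(λ_a, μ_b)`, and `∘`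
the entrywise (Hadamard) product. -/
theorem bivariate_diag_both_args {m n k l : ℕ}
    (A P : Matrix (Fin m) (Fin m) ℂ) (B Q : Matrix (Fin n) (Fin n) ℂ)
    (C : Matrix (Fin m) (Fin n) ℂ) (lam : Fin m → ℂ) (μ : Fin n → ℂ)
    (hP : IsUnit P.det) (hQ : IsUnit Q.det)
    (hA : P⁻¹ * A * P = Matrix.diagonal lam)
    (hB : Q⁻¹ * B * Q = Matrix.diagonal μ)
    (p : Fin (k + 1) → Fin (l + 1) → ℂ) :
    ∑ i : Fin (k + 1), ∑ j : Fin (l + 1),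
        p i j • (A ^ (i : ℕ) * C * Bᵀ ^ (j : ℕ)) =
    P * (Matrix.of fun a b =>
        (∑ i : Fin (k + 1), ∑ j : Fin (l + 1),
          p i j * lam a ^ (i : ℕ) * μ b ^ (j : ℕ)) * (P⁻¹ * C * (Q⁻¹)ᵀ) a b) * Qᵀ := by
  set C' := P⁻¹ * C * (Q⁻¹)ᵀ
  have hterm (i j : ℕ) : A ^ i * C * Bᵀ ^ j =
      P * (diagonal (lam ^ i) * C' * diagonal (μ ^ j)) * Qᵀ := by
    rw [pow_eq_mul_diagonal_pow_mul_inv hP hA, transpose_pow_eq_mul_diagonal_pow_mul hQ hB]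
    simp only [C', Matrix.mul_assoc]
  calc ∑ i : Fin (k + 1), ∑ j : Fin (l + 1), p i j • (A ^ (i : ℕ) * C * Bᵀ ^ (j : ℕ))
      = P * (∑ i : Fin (k + 1), ∑ j : Fin (l + 1),
          p i j • (diagonal (lam ^ (i : ℕ)) * C' * diagonal (μ ^ (j : ℕ)))) * Qᵀ := by
        simp only [hterm, Matrix.mul_sum, Matrix.sum_mul, Matrix.mul_smul, Matrix.smul_mul]
    _ = _ := by
        congr 2
        ext a b
        simp only [Matrix.sum_apply, Matrix.smul_apply, of_apply, diagonal_mul, mul_diagonal,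
          Finset.sum_mul, Pi.pow_apply, smul_eq_mul]
        exact Finset.sum_congr rfl fun i _ => Finset.sum_congr rfl fun j _ => by ring
end

section
/- Let A ∈ ℂ^{m×m} and B ∈ ℂ^{n×n} be Hermitian matrices with eigenvalues λ_1, ..., λ_m and μ_1, ..., μ_n, respectively. Then for every bivariate polynomial p(x,y) = Σ_{i=0}^{k} Σ_{j=0}^{ℓ} p_{ij} x^i y^j and every C ∈ ℂ^{m×n}, ‖p{A,B}(C)‖_F ≤ ( max_{a,b} |p(λ_a, μ_b)| ) · ‖C‖_F, where ‖·‖_F denotes the Frobenius norm. -/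
open Matrix

/-- Frobenius norm of a complex matrix. -/
noncomputable def frobNorm {m n : ℕ} (M : Matrix (Fin m) (Fin n) ℂ) : ℝ :=
  Real.sqrt (∑ a, ∑ b, ‖M a b‖ ^ 2)

/-!
Diagonalize `A = U D Uᴴ` and `Bᵀ = W E Wᴴ` with unitary `U`, `W` (for `Bᵀ`, `W` is the entrywise
conjugate of the eigenvector matrix of `B`). Since powers commute with unitary conjugation,
`p{A,B}(C) = U (P ⊙ (Uᴴ C W)) Wᴴ` with `P a b = p(λ_a, μ_b)` and `⊙` the Hadamard product.
The Frobenius norm is unitarily invariant, and the Hadamard product with `P` scales it by at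
most `max |P a b|`.
-/

open Unitary
attribute [local instance] Matrix.frobeniusNormedAddCommGroup

namespace Matrix

variable {𝕜 : Type*} [RCLike 𝕜] {m n : Type*} [Fintype m] [Fintype n]

theorem frobenius_norm_sq {α : Type*} [NormedAddCommGroup α] (M : Matrix m n α) :
    ‖M‖ ^ 2 = ∑ i, ∑ j, ‖M i j‖ ^ 2 := by
  rw [frobenius_norm_def, ← Real.rpow_natCast, ← Real.rpow_mul (by positivity)]
  norm_num

theorem frobenius_norm_sq_eq_re_trace (M : Matrix m n 𝕜) :
    ‖M‖ ^ 2 = RCLike.re (trace (Mᴴ * M)) := by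
  simp only [frobenius_norm_sq, trace, diag_apply, mul_apply, conjTranspose_apply,
    RCLike.star_def, RCLike.conj_mul, map_sum, ← RCLike.ofReal_pow, RCLike.ofReal_re]
  exact Finset.sum_comm

theorem frobenius_norm_unitary_mul [DecidableEq m] (U : unitaryGroup m 𝕜) (M : Matrix m n 𝕜) :
    ‖(U : Matrix m m 𝕜) * M‖ = ‖M‖ := by
  rw [← sq_eq_sq₀ (norm_nonneg _) (norm_nonneg _), frobenius_norm_sq_eq_re_trace,
    frobenius_norm_sq_eq_re_trace, conjTranspose_mul, Matrix.mul_assoc,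
    ← Matrix.mul_assoc _ (U : Matrix m m 𝕜), ← star_eq_conjTranspose,
    UnitaryGroup.star_mul_self, Matrix.one_mul]

theorem frobenius_norm_mul_unitary [DecidableEq n] (M : Matrix m n 𝕜) (U : unitaryGroup n 𝕜) :
    ‖M * (U : Matrix n n 𝕜)‖ = ‖M‖ := by
  rw [← frobenius_norm_conjTranspose, conjTranspose_mul, ← star_eq_conjTranspose,
    ← coe_star, frobenius_norm_unitary_mul, frobenius_norm_conjTranspose]

theorem frobenius_norm_unitary_mul_mul_unitary [DecidableEq m] [DecidableEq n]
    (U : unitaryGroup m 𝕜) (M : Matrix m n 𝕜) (V : unitaryGroup n 𝕜) :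
    ‖(U : Matrix m m 𝕜) * M * (V : Matrix n n 𝕜)‖ = ‖M‖ := by
  rw [frobenius_norm_mul_unitary, frobenius_norm_unitary_mul]

theorem frobenius_norm_hadamard_le {K : ℝ} (hK : 0 ≤ K) (Q M : Matrix m n 𝕜)
    (hQ : ∀ i j, ‖Q i j‖ ≤ K) : ‖Q ⊙ M‖ ≤ K * ‖M‖ := by
  rw [← pow_le_pow_iff_left₀ (norm_nonneg _) (by positivity) two_ne_zero, mul_pow,
    frobenius_norm_sq, frobenius_norm_sq, Finset.mul_sum]
  refine Finset.sum_le_sum fun i _ => ?_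
  rw [Finset.mul_sum]
  refine Finset.sum_le_sum fun j _ => ?_
  rw [hadamard_apply, norm_mul, mul_pow]
  gcongr
  exact hQ i j

variable [DecidableEq m] [DecidableEq n] {k l : ℕ}

/-- `p{A,B}(C)` in the paper's notation. -/
def bivariateFun (p : Fin (k + 1) → Fin (l + 1) → 𝕜) (A : Matrix m m 𝕜) (B : Matrix n n 𝕜)
    (C : Matrix m n 𝕜) : Matrix m n 𝕜 :=
  ∑ i : Fin (k + 1), ∑ j : Fin (l + 1), p i j • (A ^ (i : ℕ) * C * Bᵀ ^ (j : ℕ))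

def bivariateEval (p : Fin (k + 1) → Fin (l + 1) → 𝕜) (x y : 𝕜) : 𝕜 :=
  ∑ i : Fin (k + 1), ∑ j : Fin (l + 1), p i j * x ^ (i : ℕ) * y ^ (j : ℕ)

theorem sum_smul_diagonal_pow_mul_mul_diagonal_pow (p : Fin (k + 1) → Fin (l + 1) → 𝕜)
    (d : m → 𝕜) (e : n → 𝕜) (M : Matrix m n 𝕜) :
    ∑ i : Fin (k + 1), ∑ j : Fin (l + 1),
        p i j • (diagonal d ^ (i : ℕ) * M * diagonal e ^ (j : ℕ)) =
      of (fun a b => bivariateEval p (d a) (e b)) ⊙ M := by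
  ext a b
  simp only [sum_apply, smul_apply, diagonal_pow, diagonal_mul, mul_diagonal, Pi.pow_apply,
    smul_eq_mul, hadamard_apply, of_apply, bivariateEval, Finset.sum_mul]
  refine Finset.sum_congr rfl fun i _ => Finset.sum_congr rfl fun j _ => ?_
  ring

theorem bivariateFun_eq_of_conjStarAlgAut_diagonal {p : Fin (k + 1) → Fin (l + 1) → 𝕜}
    {A : Matrix m m 𝕜} {B : Matrix n n 𝕜} {U : unitaryGroup m 𝕜} {W : unitaryGroup n 𝕜}
    {d : m → 𝕜} {e : n → 𝕜} (hA : A = conjStarAlgAut 𝕜 _ U (diagonal d))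
    (hB : Bᵀ = conjStarAlgAut 𝕜 _ W (diagonal e)) (C : Matrix m n 𝕜) :
    bivariateFun p A B C = (U : Matrix m m 𝕜) *
      (of (fun a b => bivariateEval p (d a) (e b)) ⊙
        (star (U : Matrix m m 𝕜) * C * (W : Matrix n n 𝕜))) * star (W : Matrix n n 𝕜) := by
  have hterm : ∀ (i j : ℕ), A ^ i * C * Bᵀ ^ j = (U : Matrix m m 𝕜) *
      (diagonal d ^ i * (star (U : Matrix m m 𝕜) * C * (W : Matrix n n 𝕜)) * diagonal e ^ j) *
        star (W : Matrix n n 𝕜) := by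
    intro i j
    rw [hA, hB, ← map_pow, ← map_pow]
    simp only [conjStarAlgAut_apply, Matrix.mul_assoc]
  simp only [bivariateFun, hterm, ← sum_smul_diagonal_pow_mul_mul_diagonal_pow,
    Matrix.mul_sum, Matrix.sum_mul, Matrix.mul_smul, Matrix.smul_mul]

theorem IsHermitian.transpose_eq_conjStarAlgAut {B : Matrix n n 𝕜} (hB : B.IsHermitian) :
    Bᵀ = conjStarAlgAut 𝕜 _ (UnitaryGroup.map_star hB.eigenvectorUnitary)
      (diagonal (RCLike.ofReal ∘ hB.eigenvalues)) := by
  conv_lhs => rw [hB.spectral_theorem]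
  simp only [conjStarAlgAut_apply, transpose_mul, diagonal_transpose, UnitaryGroup.map_star_coe,
    star_eq_conjTranspose, Matrix.mul_assoc]
  rw [conjTranspose_transpose, ← transpose_conjTranspose, conjTranspose_conjTranspose]

theorem norm_bivariateFun_le {p : Fin (k + 1) → Fin (l + 1) → 𝕜} {A : Matrix m m 𝕜}
    {B : Matrix n n 𝕜} (hA : A.IsHermitian) (hB : B.IsHermitian) (C : Matrix m n 𝕜) {K : ℝ}
    (hK : 0 ≤ K) (hpK : ∀ a b, ‖bivariateEval p (hA.eigenvalues a : 𝕜) (hB.eigenvalues b)‖ ≤ K) :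
    ‖bivariateFun p A B C‖ ≤ K * ‖C‖ := by
  set U := hA.eigenvectorUnitary
  set W := UnitaryGroup.map_star hB.eigenvectorUnitary
  rw [bivariateFun_eq_of_conjStarAlgAut_diagonal hA.spectral_theorem
    hB.transpose_eq_conjStarAlgAut, ← coe_star, ← coe_star, frobenius_norm_unitary_mul_mul_unitary]
  calc _ ≤ K * ‖((star U : unitaryGroup m 𝕜) : Matrix m m 𝕜) * C * (W : Matrix n n 𝕜)‖ :=
        frobenius_norm_hadamard_le hK _ _ hpK
    _ = K * ‖C‖ := by rw [frobenius_norm_unitary_mul_mul_unitary]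

end Matrix

theorem frobNorm_eq_norm {m n : ℕ} (M : Matrix (Fin m) (Fin n) ℂ) : frobNorm M = ‖M‖ := by
  rw [frobNorm, ← frobenius_norm_sq, Real.sqrt_sq (norm_nonneg _)]

/-- Norm estimate for bivariate polynomial matrix functions of two Hermitian matrices
(part (a), M = 1, of the norm estimate lemma):
`‖p{A,B}(C)‖_F ≤ max_{a,b} |p(λ_a, μ_b)| · ‖C‖_F`. -/
theorem bivariate_norm_estimate_hermitian {m n k l : ℕ} (hm : 0 < m) (hn : 0 < n)
    (A : Matrix (Fin m) (Fin m) ℂ) (B : Matrix (Fin n) (Fin n) ℂ)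
    (hA : A.IsHermitian) (hB : B.IsHermitian)
    (p : Fin (k + 1) → Fin (l + 1) → ℂ) (C : Matrix (Fin m) (Fin n) ℂ) :
    frobNorm (∑ i : Fin (k + 1), ∑ j : Fin (l + 1),
        p i j • (A ^ (i : ℕ) * C * Bᵀ ^ (j : ℕ))) ≤
      (Finset.univ.sup' ⟨(⟨0, hm⟩, ⟨0, hn⟩), Finset.mem_univ _⟩
        fun ab : Fin m × Fin n =>
          ‖∑ i : Fin (k + 1), ∑ j : Fin (l + 1),
            p i j * (hA.eigenvalues ab.1 : ℂ) ^ (i : ℕ) *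
              (hB.eigenvalues ab.2 : ℂ) ^ (j : ℕ)‖) * frobNorm C := by
  rw [frobNorm_eq_norm, frobNorm_eq_norm]
  have hbound : ∀ a b, ‖bivariateEval p (hA.eigenvalues a : ℂ) (hB.eigenvalues b)‖ ≤ _ :=
    fun a b => Finset.le_sup' (fun ab : Fin m × Fin n =>
      ‖bivariateEval p (hA.eigenvalues ab.1 : ℂ) (hB.eigenvalues ab.2)‖) (Finset.mem_univ (a, b))
  exact norm_bivariateFun_le hA hB C ((norm_nonneg _).trans (hbound ⟨0, hm⟩ ⟨0, hn⟩)) hbound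
end

section
/- Let φ : ℝ → ℝ be defined by φ(z) = (exp(z) − 1)/z for z ≠ 0 and φ(0) = 1. Let ρ > 0 be a real number and k a positive integer with √(4ρ) ≤ k ≤ 2ρ. Then there exists a real polynomial p of degree at most k−1 such that for all z ∈ [−4ρ, 0], |φ(z) − p(z)| ≤ 40 (ρ²/k³) exp(−k²/(5ρ)). -/
/-- The phi-function of exponential integrators: `φ(z) = (e^z - 1)/z`, `φ(0) = 1`. -/
noncomputable def phiFun (z : ℝ) : ℝ :=
  if z = 0 then 1 else (Real.exp z - 1) / z

/-!
Substituting `z = 2ρ(x - 1)` maps `[-4ρ, 0]` onto `[-1, 1]`, and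
`φ(2ρ(x - 1)) = ∫₀¹ e^{-2ρt} e^{2ρxt} dt = ∑ₛ cₛ xˢ` with coefficients `cₛ ≥ 0`.
Each monomial has the Chebyshev expansion `xˢ = 2⁻ˢ ∑ⱼ C(s, j) T_{2j-s}(x)`, and dropping
the terms of degree `≥ k` costs at most the binomial tail `2⁻ˢ ∑_{|2j-s| ≥ k} C(s, j)`, which
the Chernoff bound estimates by `2 e^{-rk} (cosh r)ˢ` for every `r ≥ 0`. Summed against the
`cₛ`, the error is `2 e^{-rk} φ(2ρ(cosh r - 1))` plus an arbitrarily small tail of the power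
series. For `r = k/(2ρ) ≤ 1` the bounds `1 + r²/2 ≤ cosh r ≤ 1 + 3r²/5` turn this into
`8ρ/k² · e^{-k²/(5ρ)} ≤ 20 ρ²/k³ · e^{-k²/(5ρ)}`.
-/

section

open Finset Polynomial Polynomial.Chebyshev MeasureTheory intervalIntegral

namespace Complex

theorem exp_add_exp_neg_pow (z : ℂ) (s : ℕ) :
    (exp z + exp (-z)) ^ s =
      ∑ j ∈ range (s + 1), (s.choose j : ℂ) * exp ((2 * j - s) * z) := by
  rw [add_pow]
  refine sum_congr rfl fun j hj => ?_
  have hjs : j ≤ s := Nat.lt_succ_iff.mp (mem_range.mp hj)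
  rw [← exp_nat_mul, ← exp_nat_mul, ← exp_add, mul_comm]
  push_cast [hjs]
  ring_nf

theorem two_mul_cosh_pow (z : ℂ) (s : ℕ) :
    (2 * cosh z) ^ s =
      ∑ j ∈ range (s + 1), (s.choose j : ℂ) * cosh ((2 * j - s) * z) := by
  have hpos := exp_add_exp_neg_pow z s
  have hneg := exp_add_exp_neg_pow (-z) s
  rw [neg_neg, add_comm] at hneg
  calc (2 * cosh z) ^ s = ((exp z + exp (-z)) ^ s + (exp z + exp (-z)) ^ s) / 2 := by
        rw [two_cosh]; ring
    _ = _ := by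
        nth_rw 2 [hneg]
        rw [hpos, ← sum_add_distrib, sum_div]
        refine sum_congr rfl fun j _ => ?_
        rw [cosh]
        ring_nf

end Complex

namespace Real

theorem two_mul_cosh_pow (x : ℝ) (s : ℕ) :
    (2 * cosh x) ^ s =
      ∑ j ∈ range (s + 1), (s.choose j : ℝ) * cosh ((2 * j - s) * x) := by
  exact_mod_cast Complex.two_mul_cosh_pow x s

theorem two_mul_cos_pow (θ : ℝ) (s : ℕ) :
    (2 * cos θ) ^ s =
      ∑ j ∈ range (s + 1), (s.choose j : ℝ) * cos ((2 * j - s) * θ) := by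
  have h := Complex.two_mul_cosh_pow (θ * Complex.I) s
  simp only [Complex.cosh_mul_I, ← mul_assoc] at h
  exact_mod_cast h

theorem one_add_sq_div_two_le_cosh (x : ℝ) : 1 + x ^ 2 / 2 ≤ cosh x := by
  have h := sum_le_hasSum (range 2) (fun n _ => by rw [pow_mul]; positivity) (hasSum_cosh x)
  norm_num [sum_range_succ] at h
  linarith

theorem cosh_le_one_add_sq (x : ℝ) (hx : |x| ≤ 1) : cosh x ≤ 1 + 3 / 5 * x ^ 2 := by
  have hpos := exp_bound hx (n := 4) (by norm_num)
  have hneg := exp_bound (x := -x) (by rwa [abs_neg]) (n := 4) (by norm_num)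
  norm_num [sum_range_succ, Nat.factorial, abs_neg] at hpos hneg
  have hx4 : |x| ^ 4 ≤ x ^ 2 := by
    rw [show |x| ^ 4 = x ^ 2 * |x| ^ 2 by rw [← sq_abs x]; ring]
    exact mul_le_of_le_one_right (sq_nonneg x) (pow_le_one₀ (abs_nonneg x) hx)
  rw [cosh_eq]
  linarith [(abs_le.mp hpos).2, (abs_le.mp hneg).2, show (-x) ^ 3 = -x ^ 3 by ring, sq_nonneg x]

end Real

theorem sum_choose_filter_le_exp_mul_two_mul_cosh_pow (s K : ℕ) {r : ℝ} (hr : 0 ≤ r) :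
    ∑ j ∈ (range (s + 1)).filter (fun j : ℕ => K ≤ (2 * (j : ℤ) - s).natAbs),
        (s.choose j : ℝ) ≤ 2 * Real.exp (-(r * K)) * (2 * Real.cosh r) ^ s := by
  have hterm : ∀ j ∈ (range (s + 1)).filter (fun j : ℕ => K ≤ (2 * (j : ℤ) - s).natAbs),
      (s.choose j : ℝ) ≤
        2 * Real.exp (-(r * K)) * ((s.choose j : ℝ) * Real.cosh ((2 * j - s) * r)) := by
    intro j hj
    have hK : (K : ℝ) ≤ |2 * (j : ℝ) - s| := by
      have h : (K : ℝ) ≤ ((2 * (j : ℤ) - s).natAbs : ℝ) := by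
        exact_mod_cast (mem_filter.mp hj).2
      rwa [Nat.cast_natAbs, Int.cast_abs, Int.cast_sub, Int.cast_mul, Int.cast_ofNat,
        Int.cast_natCast, Int.cast_natCast] at h
    have hcosh : Real.exp (r * K) ≤ 2 * Real.cosh ((2 * j - s) * r) := by
      rw [← Real.cosh_abs, abs_mul, abs_of_nonneg hr, Real.cosh_eq]
      have := Real.exp_le_exp.mpr (show r * K ≤ |2 * (j : ℝ) - s| * r by nlinarith)
      linarith [Real.exp_pos (-(|2 * (j : ℝ) - s| * r))]
    have hone : 1 ≤ 2 * Real.exp (-(r * K)) * Real.cosh ((2 * j - s) * r) := by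
      rw [Real.exp_neg, mul_comm 2, mul_assoc, inv_mul_eq_div, one_le_div (Real.exp_pos _)]
      exact hcosh
    nlinarith [(Nat.cast_nonneg (s.choose j) : (0 : ℝ) ≤ _)]
  calc _ ≤ ∑ j ∈ (range (s + 1)).filter (fun j : ℕ => K ≤ (2 * (j : ℤ) - s).natAbs),
        2 * Real.exp (-(r * K)) * ((s.choose j : ℝ) * Real.cosh ((2 * j - s) * r)) :=
        sum_le_sum hterm
    _ ≤ ∑ j ∈ range (s + 1),
        2 * Real.exp (-(r * K)) * ((s.choose j : ℝ) * Real.cosh ((2 * j - s) * r)) :=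
        sum_le_sum_of_subset_of_nonneg (filter_subset _ _) fun j _ _ => by positivity
    _ = 2 * Real.exp (-(r * K)) * (2 * Real.cosh r) ^ s := by
        rw [← mul_sum, Real.two_mul_cosh_pow]

-- Mathlib's `T` is indexed by `ℤ`, with `T (-n) = T n`.
noncomputable def truncChebMonomial (K s : ℕ) : ℝ[X] :=
  ∑ j ∈ (range (s + 1)).filter (fun j : ℕ => (2 * (j : ℤ) - s).natAbs < K),
    C ((s.choose j : ℝ) / 2 ^ s) * T ℝ (2 * j - s)

theorem natDegree_truncChebMonomial_le (K s : ℕ) :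
    (truncChebMonomial K s).natDegree ≤ K - 1 := by
  refine natDegree_sum_le_of_forall_le _ _ fun j hj => ?_
  refine (natDegree_C_mul_le _ _).trans ?_
  rw [natDegree_T]
  have := (mem_filter.mp hj).2
  omega

theorem abs_pow_sub_eval_truncChebMonomial_le (K s : ℕ) {x : ℝ} (hx : x ∈ Set.Icc (-1) 1) :
    |x ^ s - (truncChebMonomial K s).eval x| ≤
      (∑ j ∈ (range (s + 1)).filter (fun j : ℕ => K ≤ (2 * (j : ℤ) - s).natAbs),
        (s.choose j : ℝ)) / 2 ^ s := by
  obtain ⟨θ, -, rfl⟩ : ∃ θ ∈ Set.Icc 0 Real.pi, Real.cos θ = x :=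
    Real.bijOn_cos.surjOn hx
  set a : ℕ → ℝ := fun j => (s.choose j : ℝ) / 2 ^ s * Real.cos ((2 * j - s) * θ) with ha
  have hpow : Real.cos θ ^ s = ∑ j ∈ range (s + 1), a j := by
    have h := Real.two_mul_cos_pow θ s
    rw [mul_pow, mul_comm, ← eq_div_iff (by positivity)] at h
    rw [h, sum_div]
    exact sum_congr rfl fun j _ => by ring
  have heval : (truncChebMonomial K s).eval (Real.cos θ) =
      ∑ j ∈ (range (s + 1)).filter (fun j : ℕ => ¬ K ≤ (2 * (j : ℤ) - s).natAbs), a j := by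
    simp only [truncChebMonomial, eval_finsetSum, eval_mul, eval_C, T_real_cos, not_le, ha]
    push_cast
    rfl
  rw [hpow, heval,
    ← sum_filter_add_sum_filter_not _ (fun j : ℕ => K ≤ (2 * (j : ℤ) - s).natAbs),
    add_sub_cancel_right, sum_div]
  refine (abs_sum_le_sum_abs _ _).trans (sum_le_sum fun j _ => ?_)
  rw [ha, abs_mul, abs_of_nonneg (by positivity)]
  exact mul_le_of_le_one_right (by positivity) (Real.abs_cos_le_one _)

theorem abs_pow_sub_eval_truncChebMonomial_le_exp (K s : ℕ) {r x : ℝ} (hr : 0 ≤ r)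
    (hx : x ∈ Set.Icc (-1) 1) :
    |x ^ s - (truncChebMonomial K s).eval x| ≤ 2 * Real.exp (-(r * K)) * Real.cosh r ^ s := by
  refine (abs_pow_sub_eval_truncChebMonomial_le K s hx).trans ?_
  rw [div_le_iff₀ (by positivity)]
  exact (sum_choose_filter_le_exp_mul_two_mul_cosh_pow s K hr).trans_eq (by ring)

theorem phiFun_eq_integral (z : ℝ) : phiFun z = ∫ t in (0 : ℝ)..1, Real.exp (z * t) := by
  rcases eq_or_ne z 0 with rfl | hz
  · simp [phiFun]
  · rw [integral_comp_mul_left (fun u => Real.exp u) hz, integral_exp, phiFun, if_neg hz]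
    simp [div_eq_inv_mul]

noncomputable def phiCoeff (a : ℝ) (s : ℕ) : ℝ :=
  a ^ s / s.factorial * ∫ t in (0 : ℝ)..1, t ^ s * Real.exp (-(a * t))

theorem phiCoeff_nonneg {a : ℝ} (ha : 0 ≤ a) (s : ℕ) : 0 ≤ phiCoeff a s :=
  mul_nonneg (by positivity) <| integral_nonneg zero_le_one fun t ht =>
    mul_nonneg (pow_nonneg ht.1 s) (Real.exp_pos _).le

theorem hasSum_phiCoeff (a x : ℝ) :
    HasSum (fun s => phiCoeff a s * x ^ s) (phiFun (a * (x - 1))) := by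
  set F : ℕ → ℝ → ℝ := fun s t => (a * x * t) ^ s / s.factorial * Real.exp (-(a * t))
  have hF : ∀ s, ∫ t in (0 : ℝ)..1, F s t = phiCoeff a s * x ^ s := by
    intro s
    rw [phiCoeff, mul_right_comm, ← intervalIntegral.integral_const_mul]
    exact integral_congr fun t _ => by simp only [F]; ring
  have hsum : ∀ t, HasSum (fun s => F s t) (Real.exp (a * (x - 1) * t)) := by
    intro t
    rw [show a * (x - 1) * t = a * x * t + -(a * t) by ring, Real.exp_add]
    have h := (NormedSpace.expSeries_div_hasSum_exp (a * x * t)).mul_right (Real.exp (-(a * t)))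
    rwa [← Real.exp_eq_exp_ℝ] at h
  have hbound : ∀ s, ∀ t ∈ Set.Icc (0 : ℝ) 1,
      ‖F s t‖ ≤ |a * x| ^ s / s.factorial * Real.exp |a| := by
    intro s t ht
    have ht' : |t| ≤ 1 := abs_le.mpr ⟨by linarith [ht.1], ht.2⟩
    simp only [F, norm_mul, norm_div, norm_pow, Real.norm_eq_abs, Nat.abs_cast, Real.abs_exp]
    gcongr
    · rw [abs_mul]; exact mul_le_of_le_one_right (by positivity) ht'
    · have hat : |a * t| ≤ |a| := by
        rw [abs_mul]; exact mul_le_of_le_one_right (abs_nonneg a) ht'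
      exact (neg_le_abs _).trans hat
  have h := intervalIntegral.hasSum_integral_of_dominated_convergence
    (μ := volume) (a := 0) (b := 1) (F := F) (f := fun t => Real.exp (a * (x - 1) * t))
    (fun s _ => |a * x| ^ s / s.factorial * Real.exp |a|)
    (fun s => (by fun_prop : Continuous (F s)).aestronglyMeasurable)
    (fun s => .of_forall fun t ht => hbound s t (Set.Ioc_subset_Icc_self
      (by rwa [Set.uIoc_of_le zero_le_one] at ht)))
    (.of_forall fun _ _ => (Real.summable_pow_div_factorial _).mul_right _)
    intervalIntegrable_const (.of_forall fun t _ => hsum t)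
  simpa only [hF, ← phiFun_eq_integral] using h

theorem abs_sub_sum_range_le_of_hasSum {c : ℕ → ℝ} (hc : ∀ s, 0 ≤ c s) {x f f₁ : ℝ}
    (hx : |x| ≤ 1) (hf : HasSum (fun s => c s * x ^ s) f) (hf₁ : HasSum c f₁) (N : ℕ) :
    |f - ∑ s ∈ range N, c s * x ^ s| ≤ f₁ - ∑ s ∈ range N, c s := by
  rw [← hasSum_nat_add_iff' N] at hf hf₁
  rw [← hf.tsum_eq, ← Real.norm_eq_abs]
  refine tsum_of_norm_bounded hf₁ fun s => ?_
  rw [Real.norm_eq_abs, abs_mul, abs_pow, abs_of_nonneg (hc _)]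
  exact mul_le_of_le_one_right (hc _) (pow_le_one₀ (abs_nonneg x) hx)

theorem exists_natDegree_le_abs_phiFun_comp_sub_eval_le {a r ε : ℝ} (ha : 0 ≤ a) (hr : 0 ≤ r)
    (hε : 0 < ε) (K : ℕ) :
    ∃ P : ℝ[X], P.natDegree ≤ K - 1 ∧ ∀ x ∈ Set.Icc (-1 : ℝ) 1,
      |phiFun (a * (x - 1)) - P.eval x| ≤
        2 * Real.exp (-(r * K)) * phiFun (a * (Real.cosh r - 1)) + ε := by
  have hc := phiCoeff_nonneg ha
  have hone : HasSum (phiCoeff a) (phiFun 0) := by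
    simpa using hasSum_phiCoeff a 1
  obtain ⟨N, hN⟩ := (hone.tendsto_sum_nat.eventually (lt_mem_nhds (sub_lt_self _ hε))).exists
  refine ⟨∑ s ∈ range N, C (phiCoeff a s) * truncChebMonomial K s,
    natDegree_sum_le_of_forall_le _ _ fun s _ =>
      (natDegree_C_mul_le _ _).trans (natDegree_truncChebMonomial_le K s), fun x hx => ?_⟩
  have htail := abs_sub_sum_range_le_of_hasSum hc (abs_le.mpr hx) (hasSum_phiCoeff a x) hone N
  have htrunc : |∑ s ∈ range N, phiCoeff a s * (x ^ s - (truncChebMonomial K s).eval x)| ≤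
      2 * Real.exp (-(r * K)) * phiFun (a * (Real.cosh r - 1)) := by
    calc _ ≤ ∑ s ∈ range N, phiCoeff a s * (2 * Real.exp (-(r * K)) * Real.cosh r ^ s) := by
          refine (abs_sum_le_sum_abs _ _).trans (sum_le_sum fun s _ => ?_)
          rw [abs_mul, abs_of_nonneg (hc s)]
          exact mul_le_mul_of_nonneg_left
            (abs_pow_sub_eval_truncChebMonomial_le_exp K s hr hx) (hc s)
      _ = 2 * Real.exp (-(r * K)) * ∑ s ∈ range N, phiCoeff a s * Real.cosh r ^ s := by
          rw [mul_sum]; exact sum_congr rfl fun s _ => by ring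
      _ ≤ _ := by
          gcongr
          exact sum_le_hasSum _ (fun s _ => mul_nonneg (hc s) (by positivity))
            (hasSum_phiCoeff a (Real.cosh r))
  have hsplit : phiFun (a * (x - 1)) -
        (∑ s ∈ range N, C (phiCoeff a s) * truncChebMonomial K s).eval x =
      (phiFun (a * (x - 1)) - ∑ s ∈ range N, phiCoeff a s * x ^ s) +
        ∑ s ∈ range N, phiCoeff a s * (x ^ s - (truncChebMonomial K s).eval x) := by
    simp only [eval_finsetSum, eval_mul, eval_C, mul_sub, sum_sub_distrib]
    ring
  rw [hsplit]
  refine (abs_add_le _ _).trans ?_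
  linarith

theorem exists_natDegree_le_abs_phiFun_sub_eval_le {a r ε : ℝ} (ha : 0 < a) (hr : 0 ≤ r)
    (hε : 0 < ε) (K : ℕ) :
    ∃ p : ℝ[X], p.natDegree ≤ K - 1 ∧ ∀ z ∈ Set.Icc (-(2 * a)) 0,
      |phiFun z - p.eval z| ≤ 2 * Real.exp (-(r * K)) * phiFun (a * (Real.cosh r - 1)) + ε := by
  obtain ⟨P, hdeg, hP⟩ := exists_natDegree_le_abs_phiFun_comp_sub_eval_le ha.le hr hε K
  refine ⟨P.comp (C a⁻¹ * X + C 1), ?_, fun z hz => ?_⟩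
  · exact natDegree_comp_le.trans (by nlinarith [natDegree_linear_le (a := a⁻¹) (b := 1)])
  · have hx : z / a + 1 ∈ Set.Icc (-1 : ℝ) 1 := by
      constructor
      · have : -2 ≤ z / a := by rw [le_div_iff₀ ha]; linarith [hz.1]
        linarith
      · have : z / a ≤ 0 := div_nonpos_of_nonpos_of_nonneg hz.2 ha.le
        linarith
    have h := hP _ hx
    rw [show a * (z / a + 1 - 1) = z by field_simp; ring] at h
    simpa [eval_comp, div_eq_inv_mul] using h

theorem phiFun_le_exp_div {z : ℝ} (hz : 0 < z) : phiFun z ≤ Real.exp z / z := by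
  rw [phiFun, if_neg hz.ne']
  gcongr
  linarith

theorem two_mul_exp_mul_phiFun_le {ρ K : ℝ} (hρ : 0 < ρ) (hK : 0 < K) (hKρ : K ≤ 2 * ρ) :
    2 * Real.exp (-(K / (2 * ρ) * K)) * phiFun (2 * ρ * (Real.cosh (K / (2 * ρ)) - 1)) ≤
      8 * ρ / K ^ 2 * Real.exp (-K ^ 2 / (5 * ρ)) := by
  set r := K / (2 * ρ) with hr
  have hr1 : |r| ≤ 1 := by
    rw [abs_of_pos (by positivity), hr, div_le_one (by positivity)]; exact hKρ
  set E := 2 * ρ * (Real.cosh r - 1)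
  have hρr : ρ * r ^ 2 = K ^ 2 / (4 * ρ) := by rw [hr]; field_simp; ring
  have hE_lower : K ^ 2 / (4 * ρ) ≤ E := by
    nlinarith [Real.one_add_sq_div_two_le_cosh r]
  have hE_upper : E ≤ 3 * K ^ 2 / (10 * ρ) := by
    have : 3 * K ^ 2 / (10 * ρ) = 6 / 5 * (ρ * r ^ 2) := by rw [hρr]; field_simp; ring
    nlinarith [Real.cosh_le_one_add_sq r hr1]
  have hexponent : -(r * K) + E ≤ -K ^ 2 / (5 * ρ) := by
    have : r * K = K ^ 2 / (2 * ρ) := by rw [hr]; ring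
    have : -K ^ 2 / (5 * ρ) = -(K ^ 2 / (2 * ρ)) + 3 * K ^ 2 / (10 * ρ) := by field_simp; ring
    linarith
  have hE : 0 < E := lt_of_lt_of_le (by positivity) hE_lower
  calc 2 * Real.exp (-(r * K)) * phiFun E ≤ 2 * Real.exp (-(r * K)) * (Real.exp E / E) := by
        gcongr; exact phiFun_le_exp_div hE
    _ = 2 / E * Real.exp (-(r * K) + E) := by rw [Real.exp_add]; ring
    _ ≤ 2 / (K ^ 2 / (4 * ρ)) * Real.exp (-K ^ 2 / (5 * ρ)) := by gcongr
    _ = 8 * ρ / K ^ 2 * Real.exp (-K ^ 2 / (5 * ρ)) := by field_simp; ring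

end

theorem phi_poly_approx_first_bound_general (ρ : ℝ) (hρ : 0 < ρ) (k : ℕ) (hk : 0 < k)
    (h2 : (k : ℝ) ≤ 2 * ρ) :
    ∃ p : Polynomial ℝ, p.natDegree ≤ k - 1 ∧
      ∀ z ∈ Set.Icc (-(4 * ρ)) 0,
        |phiFun z - p.eval z| ≤ 40 * (ρ ^ 2 / (k : ℝ) ^ 3) *
          Real.exp (-(k : ℝ) ^ 2 / (5 * ρ)) := by
  have hk' : (0 : ℝ) < k := by exact_mod_cast hk
  set B := 20 * (ρ ^ 2 / (k : ℝ) ^ 3) * Real.exp (-(k : ℝ) ^ 2 / (5 * ρ))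
  obtain ⟨p, hdeg, hp⟩ := exists_natDegree_le_abs_phiFun_sub_eval_le (a := 2 * ρ)
    (r := k / (2 * ρ)) (ε := B) (by positivity) (by positivity) (by positivity) k
  have hmain := two_mul_exp_mul_phiFun_le hρ hk' h2
  have hprefactor : 8 * ρ / (k : ℝ) ^ 2 ≤ 20 * (ρ ^ 2 / (k : ℝ) ^ 3) := by
    calc 8 * ρ / (k : ℝ) ^ 2 = 8 * ρ * k / (k : ℝ) ^ 3 := by field_simp
      _ ≤ 20 * ρ ^ 2 / (k : ℝ) ^ 3 := by gcongr ?_ / _; nlinarith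
      _ = 20 * (ρ ^ 2 / (k : ℝ) ^ 3) := by ring
  refine ⟨p, hdeg, fun z hz => ?_⟩
  calc |phiFun z - p.eval z|
        ≤ 8 * ρ / (k : ℝ) ^ 2 * Real.exp (-(k : ℝ) ^ 2 / (5 * ρ)) + B := by
        linarith [hp z ⟨by linarith [hz.1], hz.2⟩]
    _ ≤ B + B := by
        gcongr
        exact mul_le_mul_of_nonneg_right hprefactor (Real.exp_pos _).le
    _ = _ := by ring

/-- First bound of Lemma A.1: for `√(4ρ) ≤ k ≤ 2ρ` there is a polynomial of degree at
most `k - 1` approximating `φ` on `[-4ρ, 0]` with error at most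
`40 (ρ²/k³) exp(-k²/(5ρ))`. -/
theorem phi_poly_approx_first_bound (ρ : ℝ) (hρ : 0 < ρ) (k : ℕ) (hk : 0 < k)
    (h1 : Real.sqrt (4 * ρ) ≤ (k : ℝ)) (h2 : (k : ℝ) ≤ 2 * ρ) :
    ∃ p : Polynomial ℝ, p.natDegree ≤ k - 1 ∧
      ∀ z ∈ Set.Icc (-(4 * ρ)) 0,
        |phiFun z - p.eval z| ≤ 40 * (ρ ^ 2 / (k : ℝ) ^ 3) *
          Real.exp (-(k : ℝ) ^ 2 / (5 * ρ)) :=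
  phi_poly_approx_first_bound_general ρ hρ k hk h2
end

section
/- Let ρ ≥ 1 and k be real numbers with √(4ρ) ≤ k ≤ 2ρ. Then (√(k² + 4ρ²) − 2ρ)/k + log( √(k²/(4ρ²) + 1) − k/(2ρ) ) ≤ −k/(5ρ). -/
/-!
In the variable `t = k / (2ρ) ∈ (0, 1]` the inequality reads
`(√(1 + t²) - 1) / t + 2t/5 ≤ arsinh t`, because `log (√(1 + t²) - t) = -arsinh t`.
Writing `arsinh t = log (1 + a)` with `a = t + √(1 + t²) - 1 ≥ 0`, the first term of the
series `log (1 + a) = 2 artanh (a / (a + 2))` gives `arsinh t ≥ 2a / (a + 2)`, and the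
remaining algebraic inequality holds because `√(1 + t²) ≤ 3/2`.
-/

open Real

lemma two_mul_div_add_two_le_log_one_add {a : ℝ} (ha : 0 ≤ a) :
    2 * a / (a + 2) ≤ log (1 + a) := by
  -- first term of `log (1 + a) = ∑ 2 / (2k + 1) * (a / (a + 2)) ^ (2k + 1)`
  have hsum := hasSum_log_one_add ha
  refine le_trans (le_of_eq ?_) (le_hasSum hsum 0 fun j _ => by positivity)
  ring

lemma sqrt_one_add_sq_sub_one_div_add_le_arsinh {t : ℝ} (ht0 : 0 < t) (ht1 : t ≤ 1) :
    (√(1 + t ^ 2) - 1) / t + 2 * t / 5 ≤ arsinh t := by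
  set s := √(1 + t ^ 2) with hs_def
  have hs : s ^ 2 = 1 + t ^ 2 := sq_sqrt (by positivity)
  have hs1 : 1 ≤ s := by nlinarith [sqrt_nonneg (1 + t ^ 2)]
  have hs32 : s ≤ 3 / 2 := by nlinarith
  have hlog_bound := two_mul_div_add_two_le_log_one_add (a := t + s - 1) (by linarith)
  have harsinh : arsinh t = log (1 + (t + s - 1)) := by rw [arsinh, ← hs_def]; ring_nf
  rw [harsinh]
  refine le_trans ?_ hlog_bound
  rw [div_add_div _ _ ht0.ne' (by norm_num), div_le_div_iff₀ (by positivity) (by linarith)]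
  -- modulo `s ^ 2 = 1 + t ^ 2`, the difference of the two sides is `t (3 - 2s) (s + t - 1)`
  nlinarith [mul_nonneg (mul_nonneg ht0.le (by linarith : (0 : ℝ) ≤ 3 - 2 * s))
    (by linarith : 0 ≤ s + t - 1)]

/-- The inequality established inside the proof of Lemma A.1: for `ρ ≥ 1` and
`√(4ρ) ≤ k ≤ 2ρ`,
`(√(k² + 4ρ²) - 2ρ)/k + log(√(k²/(4ρ²) + 1) - k/(2ρ)) ≤ -k/(5ρ)`. -/
theorem key_log_inequality (ρ k : ℝ) (hρ : 1 ≤ ρ)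
    (h1 : Real.sqrt (4 * ρ) ≤ k) (h2 : k ≤ 2 * ρ) :
    (Real.sqrt (k ^ 2 + 4 * ρ ^ 2) - 2 * ρ) / k +
      Real.log (Real.sqrt (k ^ 2 / (4 * ρ ^ 2) + 1) - k / (2 * ρ)) ≤ -k / (5 * ρ) := by
  have hρ0 : 0 < ρ := by linarith
  have hk0 : 0 < k := (sqrt_pos.2 (by positivity)).trans_le h1
  set t := k / (2 * ρ) with ht_def
  have hk : k = 2 * ρ * t := by rw [ht_def]; field_simp
  have ht0 : 0 < t := by positivity
  have ht1 : t ≤ 1 := by rw [ht_def, div_le_one (by positivity)]; exact h2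
  have hsqrt : √(k ^ 2 + 4 * ρ ^ 2) = 2 * ρ * √(1 + t ^ 2) := by
    rw [show k ^ 2 + 4 * ρ ^ 2 = (2 * ρ) ^ 2 * (1 + t ^ 2) by rw [hk]; ring,
      sqrt_mul (by positivity), sqrt_sq (by positivity)]
  have hlog : log (√(k ^ 2 / (4 * ρ ^ 2) + 1) - t) = -arsinh t := by
    have ht2 : k ^ 2 / (4 * ρ ^ 2) = t ^ 2 := by rw [ht_def]; ring
    rw [ht2, ← arsinh_neg, arsinh, neg_sq, add_comm (t ^ 2), sub_eq_neg_add]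
  calc (√(k ^ 2 + 4 * ρ ^ 2) - 2 * ρ) / k + log (√(k ^ 2 / (4 * ρ ^ 2) + 1) - t)
      = (√(1 + t ^ 2) - 1) / t - arsinh t := by
        rw [hsqrt, hlog, hk]; field_simp; ring
    _ ≤ -(2 * t / 5) := by linarith [sqrt_one_add_sq_sub_one_div_add_le_arsinh ht0 ht1]
    _ = -k / (5 * ρ) := by rw [hk]; field_simp
end

section
/- Let ρ > 0 and k be real numbers with k ≥ 2ρ. Then (√(k² + 4ρ²) − 2ρ)/k + log( √(k²/(4ρ²) + 1) − k/(2ρ) ) ≤ log(e ρ) − log(k + 2ρ), where e is Euler's number and log is the natural logarithm. -/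
/-!
Write `s = √(k² + 4ρ²)`. Then `r⁻¹ = 2ρ / (s + k)`, and the inequality becomes
`log z ≤ 1 - (s - 2ρ) / k` for `z = 2(k + 2ρ) / (s + k) ≥ 1`.
Since `x ≤ sinh x` for `x ≥ 0`, we have `log z ≤ sinh (log z) = (z - z⁻¹) / 2`,
and `(z - z⁻¹) / 2 ≤ 1 - (s - 2ρ) / k` is linear in `s`; squaring it removes the
square root and leaves a polynomial in `k, ρ` with nonnegative coefficients.
-/

open Real

lemma Real.log_le_half_sub_inv {z : ℝ} (hz : 1 ≤ z) : log z ≤ (z - z⁻¹) / 2 := by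
  rw [← sinh_log (by linarith)]
  exact self_le_sinh_iff.2 (log_nonneg hz)

namespace BernsteinEllipse

variable {ρ k : ℝ}

lemma sqrt_div_sq_add_one_sub_div (hρ : 0 < ρ) (hk : 0 ≤ k) :
    √(k ^ 2 / (4 * ρ ^ 2) + 1) - k / (2 * ρ) = 2 * ρ / (√(k ^ 2 + 4 * ρ ^ 2) + k) := by
  have hs : √(k ^ 2 + 4 * ρ ^ 2) ^ 2 = k ^ 2 + 4 * ρ ^ 2 := sq_sqrt (by positivity)
  have hsqrt : √(k ^ 2 / (4 * ρ ^ 2) + 1) = √(k ^ 2 + 4 * ρ ^ 2) / (2 * ρ) := by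
    rw [← sqrt_sq (by positivity : 0 ≤ 2 * ρ), ← sqrt_div (by positivity)]
    congr 1
    field_simp
    ring
  rw [hsqrt, div_sub_div_same, div_eq_div_iff (by positivity) (by positivity)]
  linear_combination hs

lemma cubic_le_sqrt_mul_quadratic (hρ : 0 ≤ ρ) (hk : 0 ≤ k) :
    k ^ 3 + 4 * k ^ 2 * ρ + 6 * k * ρ ^ 2 + 16 * ρ ^ 3 ≤
      √(k ^ 2 + 4 * ρ ^ 2) * (k ^ 2 + 4 * k * ρ + 8 * ρ ^ 2) := by
  have hgap : 0 ≤ k * ρ ^ 2 * (8 * k ^ 3 + 16 * k ^ 2 * ρ + 28 * k * ρ ^ 2 + 64 * ρ ^ 3) := by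
    positivity
  rw [← pow_le_pow_iff_left₀ (by positivity) (by positivity) two_ne_zero, mul_pow,
    sq_sqrt (by positivity)]
  linarith

lemma one_le_ratio (hρ : 0 ≤ ρ) (hk : 0 < k) :
    1 ≤ 2 * (k + 2 * ρ) / (√(k ^ 2 + 4 * ρ ^ 2) + k) := by
  have hs : √(k ^ 2 + 4 * ρ ^ 2) ≤ k + 4 * ρ := by
    rw [sqrt_le_left (by positivity)]
    nlinarith
  rw [le_div_iff₀ (by positivity)]
  linarith

lemma half_sub_inv_ratio_le (hρ : 0 ≤ ρ) (hk : 0 < k) :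
    let z := 2 * (k + 2 * ρ) / (√(k ^ 2 + 4 * ρ ^ 2) + k)
    (z - z⁻¹) / 2 ≤ 1 - (√(k ^ 2 + 4 * ρ ^ 2) - 2 * ρ) / k := by
  intro z
  have hs : √(k ^ 2 + 4 * ρ ^ 2) ^ 2 = k ^ 2 + 4 * ρ ^ 2 := sq_sqrt (by positivity)
  have hkey := cubic_le_sqrt_mul_quadratic hρ hk.le
  simp only [z, inv_div]
  rw [div_sub_div _ _ (by positivity) (by positivity), div_div,
    div_le_iff₀ (by positivity), one_sub_div hk.ne', div_mul_eq_mul_div, le_div_iff₀ hk]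
  nlinarith

lemma log_ratio_le (hρ : 0 ≤ ρ) (hk : 0 < k) :
    log (2 * (k + 2 * ρ) / (√(k ^ 2 + 4 * ρ ^ 2) + k)) ≤
      1 - (√(k ^ 2 + 4 * ρ ^ 2) - 2 * ρ) / k :=
  (log_le_half_sub_inv (one_le_ratio hρ hk)).trans (half_sub_inv_ratio_le hρ hk)

end BernsteinEllipse

/-- Inequality used in the proof of the second bound (`k ≥ 2ρ`) of Lemma A.1:
`(√(k² + 4ρ²) - 2ρ)/k + log(√(k²/(4ρ²) + 1) - k/(2ρ)) ≤ log(eρ) - log(k + 2ρ)`. -/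
theorem key_log_inequality_large_k (ρ k : ℝ) (hρ : 0 < ρ) (h2 : 2 * ρ ≤ k) :
    (Real.sqrt (k ^ 2 + 4 * ρ ^ 2) - 2 * ρ) / k +
      Real.log (Real.sqrt (k ^ 2 / (4 * ρ ^ 2) + 1) - k / (2 * ρ)) ≤
      Real.log (Real.exp 1 * ρ) - Real.log (k + 2 * ρ) := by
  have hk : 0 < k := by linarith
  have hlog := BernsteinEllipse.log_ratio_le hρ.le hk
  rw [log_div (by positivity) (by positivity), log_mul two_ne_zero (by positivity)] at hlog
  rw [BernsteinEllipse.sqrt_div_sq_add_one_sub_div hρ hk.le,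
    log_div (by positivity) (by positivity), log_mul two_ne_zero hρ.ne',
    log_mul (exp_ne_zero 1) hρ.ne', log_exp]
  linarith
end

section
/- Let ρ > 0 and k be real numbers with k ≥ 2ρ. Then (√(k² + 4ρ²) − 2ρ) · ( 1 − ( √(k²/(4ρ²) + 1) − k/(2ρ) ) ) ≥ (3/4)k − (5/4)ρ. -/
/-!
Write `s = √(k² + 4ρ²)`, so that the inner square root is `s / (2ρ)` and the left-hand side is
`(s - 2ρ)(k + 2ρ - s) / (2ρ)`. Using `s² = k² + 4ρ²`, the inequality becomes the linear bound
`k² + 7kρ/2 + 11ρ²/2 ≤ s (k + 4ρ)` in `s`, which after squaring is a polynomial inequality in `k`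
and `ρ` that holds for `k ≥ 2ρ ≥ 0`.
-/

theorem Real.sqrt_div_sq_add_one (a : ℝ) {c : ℝ} (hc : 0 < c) :
    √(a / c ^ 2 + 1) = √(a + c ^ 2) / c := by
  rw [div_add_one (by positivity), Real.sqrt_div' _ (by positivity), Real.sqrt_sq hc.le]

theorem sq_le_mul_sq_of_two_mul_le {ρ k : ℝ} (hρ : 0 ≤ ρ) (hk : 2 * ρ ≤ k) :
    (k ^ 2 + 7 / 2 * k * ρ + 11 / 2 * ρ ^ 2) ^ 2 ≤ (k ^ 2 + 4 * ρ ^ 2) * (k + 4 * ρ) ^ 2 := by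
  -- the difference is `ρ ((k - 2ρ)(k - 7ρ/2)² + ρ (23k² - 131kρ + 233ρ²)/4)`,
  -- and the last quadratic form has negative discriminant
  have hq : 0 ≤ 23 * k ^ 2 - 131 * k * ρ + 233 * ρ ^ 2 := by
    nlinarith [sq_nonneg (46 * k - 131 * ρ), sq_nonneg ρ]
  have hcubic :
      0 ≤ (k - 2 * ρ) * (k - 7 / 2 * ρ) ^ 2 + ρ * (23 * k ^ 2 - 131 * k * ρ + 233 * ρ ^ 2) / 4 := by
    have := mul_nonneg (sub_nonneg.2 hk) (sq_nonneg (k - 7 / 2 * ρ))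
    have := mul_nonneg hρ hq
    linarith
  nlinarith [mul_nonneg hρ hcubic]

/-- Inequality used in the proof of the second bound (`k ≥ 2ρ`) of Lemma A.1:
`(√(k² + 4ρ²) - 2ρ)(1 - (√(k²/(4ρ²) + 1) - k/(2ρ))) ≥ (3/4)k - (5/4)ρ`. -/
theorem product_lower_bound_large_k (ρ k : ℝ) (hρ : 0 < ρ) (h2 : 2 * ρ ≤ k) :
    (Real.sqrt (k ^ 2 + 4 * ρ ^ 2) - 2 * ρ) *
      (1 - (Real.sqrt (k ^ 2 / (4 * ρ ^ 2) + 1) - k / (2 * ρ))) ≥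
      3 / 4 * k - 5 / 4 * ρ := by
  set s := √(k ^ 2 + 4 * ρ ^ 2)
  have hs : s ^ 2 = k ^ 2 + 4 * ρ ^ 2 := Real.sq_sqrt (by positivity)
  have hinner : √(k ^ 2 / (4 * ρ ^ 2) + 1) = s / (2 * ρ) := by
    have := Real.sqrt_div_sq_add_one (k ^ 2) (by positivity : 0 < 2 * ρ)
    rwa [mul_pow, show (2 : ℝ) ^ 2 = 4 by norm_num] at this
  have hlinear : k ^ 2 + 7 / 2 * k * ρ + 11 / 2 * ρ ^ 2 ≤ s * (k + 4 * ρ) := by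
    rw [← Real.sqrt_sq (by linarith : 0 ≤ k + 4 * ρ), ← Real.sqrt_mul (by positivity)]
    exact Real.le_sqrt_of_sq_le (sq_le_mul_sq_of_two_mul_le hρ.le h2)
  have hdiff : (s - 2 * ρ) * (1 - (s / (2 * ρ) - k / (2 * ρ))) - (3 / 4 * k - 5 / 4 * ρ) =
      (s * (k + 4 * ρ) - (k ^ 2 + 7 / 2 * k * ρ + 11 / 2 * ρ ^ 2)) / (2 * ρ) := by
    field_simp
    linear_combination (-8) * hs
  rw [hinner, ge_iff_le, ← sub_nonneg, hdiff]
  exact div_nonneg (sub_nonneg.2 hlinear) (by positivity)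
end
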